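/- Let M = M_{ap^α, bp^α} be a local singular ACM with least power β such that p^β ∈ M, and suppose α < β. Then the catenary degree of M equals 1 + ⌈β/α⌉. -/

import Mathlib

/-- Membership in the arithmetical congruence monoid `M_{a,b} = (a + b ℕ₀) ∪ {1}`. -/
def acmMem (a b x : ℕ) : Prop := x = 1 ∨ ∃ k : ℕ, x = a + k * b

/-- `x` is an atom (irreducible) of `M_{a,b}`. -/
def acmAtom (a b x : ℕ) : Prop :=
  acmMem a b x ∧ x ≠ 1 ∧
    ∀ y z : ℕ, acmMem a b y → acmMem a b z → x = y * z → y = 1 ∨ z = 1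

/-- `s` is a factorization of `x` into atoms of `M_{a,b}`. -/
def acmFactorization (a b x : ℕ) (s : Multiset ℕ) : Prop :=
  (∀ u ∈ s, acmAtom a b u) ∧ s.prod = x

/-- The distance between two factorizations. -/
def facDist (s t : Multiset ℕ) : ℕ := max (Multiset.card (s - t)) (Multiset.card (t - s))

/-- There is an `N`-chain of factorizations of `x` from `z₁` to `z₂` in `M_{a,b}`. -/
def acmNChain (a b x N : ℕ) (z₁ z₂ : Multiset ℕ) : Prop :=
  ∃ L : List (Multiset ℕ), L ≠ [] ∧ L.head? = some z₁ ∧ L.getLast? = some z₂ ∧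
    (∀ z ∈ L, acmFactorization a b x z) ∧ L.Chain' (fun s t => facDist s t ≤ N)

/-- The set of `N` such that any two factorizations of any element of `M_{a,b}`
are connected by an `N`-chain; `c(M) = n` iff `n` is the least element of this set. -/
def acmCatSet (a b : ℕ) : Set ℕ :=
  {N | ∀ x, acmMem a b x → ∀ z₁ z₂, acmFactorization a b x z₁ →
      acmFactorization a b x z₂ → acmNChain a b x N z₁ z₂}

/-- Divisibility inside the monoid `M_{a,b}`. -/
def acmDvd (a b x y : ℕ) : Prop := ∃ k, acmMem a b k ∧ x * k = y

/-- `s` is a bullet of `x` in `M_{a,b}`. -/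
def acmBullet (a b x : ℕ) (s : Multiset ℕ) : Prop :=
  (∀ u ∈ s, acmAtom a b u) ∧ acmDvd a b x s.prod ∧
    ∀ t : Multiset ℕ, t ≤ s → t ≠ s → ¬ acmDvd a b x t.prod

/-- Omega primality of `x` in `M_{a,b}`: the sup of the lengths of bullets of `x`. -/
noncomputable def acmOmega (a b x : ℕ) : ℕ∞ :=
  sSup {n : ℕ∞ | ∃ s : Multiset ℕ, acmBullet a b x s ∧ (Multiset.card s : ℕ∞) = n}

/-- The set of factorization lengths of `x` in `M_{a,b}`. -/
def acmLengthSet (a b x : ℕ) : Set ℕ :=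
  {n | ∃ s : Multiset ℕ, acmFactorization a b x s ∧ Multiset.card s = n}

/-- `x` has at least two distinct factorization lengths. -/
def acmLI (a b x : ℕ) : Prop := ∃ m ∈ acmLengthSet a b x, ∃ n ∈ acmLengthSet a b x, m ≠ n

/-- The length density of an element `x` of `M_{a,b}`. -/
noncomputable def acmLD (a b x : ℕ) : ℝ :=
  (((acmLengthSet a b x).ncard : ℝ) - 1) /
    (((sSup (acmLengthSet a b x) : ℕ) : ℝ) - ((sInf (acmLengthSet a b x) : ℕ) : ℝ))

/-!
In `M = {1} ∪ {x : p^α ∣ x, x ≡ 1 (mod b)}` every atom has `p`-valuation in `[α, α + β)` and `p^β`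
is an atom; let `q = ⌈β/α⌉`.

Upper bound, by induction on `x`: two factorizations of length at most `q + 1` are one step
apart. Otherwise `v_p(x) ≥ (q + 2)α ≥ α + β`, and each factorization of `x` is joined by a
`(q + 1)`-chain to one containing `p^β`: either removing some atom leaves a cofactor divisible by
`p^(α+β)`, which by induction can be refactored through `p^β`, or the factorization is short and
`v_p(x) < 2(α + β)`, in which case `x` has a short factorization through `p^β`. Two factorizations
sharing `p^β` are joined by induction applied to `x / p^β`.

Lower bound: by Dirichlet's theorem there is a prime `r` with `p^α r ≡ 1 (mod b)`. Comparing
`p`- and `r`-valuations shows that `(p^α r)^k` with `k ≤ q` factors only as `k` copies of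
`p^α r`, so the factorization of `(p^α r)^(q+1)` into copies of `p^α r` shares no atom with any
other one, such as `p^β · p^((q+1)α-β) r^(q+1)`.
-/

section Chains

variable {A B x N : ℕ}

theorem acmAtom.ne_zero {u : ℕ} (hu : acmAtom A B u) : u ≠ 0 := by
  rintro rfl
  simpa using hu.2.2 0 0 hu.1 hu.1 rfl

theorem acmAtom.two_le {u : ℕ} (hu : acmAtom A B u) : 2 ≤ u := by
  have := hu.ne_zero
  have := hu.2.1
  omega

theorem acmFactorization.singleton {u : ℕ} (hu : acmAtom A B u) : acmFactorization A B u {u} :=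
  ⟨by simpa using hu, by simp⟩

theorem acmFactorization.cons {u : ℕ} {z : Multiset ℕ} (hu : acmAtom A B u)
    (hz : acmFactorization A B x z) : acmFactorization A B (u * x) (u ::ₘ z) :=
  ⟨by simpa using ⟨hu, hz.1⟩, by rw [Multiset.prod_cons, hz.2]⟩

theorem acmFactorization.add {y : ℕ} {z w : Multiset ℕ} (hz : acmFactorization A B x z)
    (hw : acmFactorization A B y w) : acmFactorization A B (x * y) (z + w) :=
  ⟨fun u hu => (Multiset.mem_add.1 hu).elim (hz.1 u) (hw.1 u),
    by rw [Multiset.prod_add, hz.2, hw.2]⟩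

theorem acmFactorization.erase {u : ℕ} {z : Multiset ℕ} (hz : acmFactorization A B x z) :
    acmFactorization A B (z.erase u).prod (z.erase u) :=
  ⟨fun w hw => hz.1 w (Multiset.mem_of_mem_erase hw), rfl⟩

theorem acmFactorization.ne_zero {z : Multiset ℕ} (hz : acmFactorization A B x z) : x ≠ 0 :=
  hz.2 ▸ Multiset.prod_ne_zero fun h => (hz.1 0 h).ne_zero rfl

theorem acmFactorization.prod_erase_lt {u : ℕ} {z : Multiset ℕ} (hz : acmFactorization A B x z)
    (hu : u ∈ z) : (z.erase u).prod < x := by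
  have hrest := (hz.erase (u := u)).ne_zero
  have := (hz.1 u hu).two_le
  rw [← hz.2, ← Multiset.prod_erase hu]
  nlinarith [Nat.pos_of_ne_zero hrest]

theorem exists_acmFactorization (h0 : ¬ acmMem A B 0) (hx : acmMem A B x) :
    ∃ z, acmFactorization A B x z := by
  induction x using Nat.strong_induction_on with
  | _ x IH =>
  by_cases hx1 : x = 1
  · exact ⟨0, by simp, by simp [hx1]⟩
  by_cases hat : acmAtom A B x
  · exact ⟨{x}, acmFactorization.singleton hat⟩
  obtain ⟨y, z, hy, hz, rfl, hy1, hz1⟩ : ∃ y z, acmMem A B y ∧ acmMem A B z ∧ x = y * z ∧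
      y ≠ 1 ∧ z ≠ 1 := by
    simpa [acmAtom, hx, hx1] using hat
  have hy2 : 2 ≤ y := by have : y ≠ 0 := fun h => h0 (h ▸ hy); omega
  have hz2 : 2 ≤ z := by have : z ≠ 0 := fun h => h0 (h ▸ hz); omega
  obtain ⟨G, hG⟩ := IH y (by nlinarith) hy
  obtain ⟨H, hH⟩ := IH z (by nlinarith) hz
  exact ⟨G + H, hG.add hH⟩

theorem facDist_le_max_card (s t : Multiset ℕ) :
    facDist s t ≤ max (Multiset.card s) (Multiset.card t) :=
  max_le_max (Multiset.card_le_card tsub_le_self) (Multiset.card_le_card tsub_le_self)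

theorem count_le_facDist_of_notMem {u : ℕ} {s t : Multiset ℕ} (hu : u ∉ t) :
    s.count u ≤ facDist s t := by
  calc s.count u = (s - t).count u := by simp [Multiset.count_sub, Multiset.count_eq_zero.2 hu]
    _ ≤ Multiset.card (s - t) := Multiset.count_le_card _ _
    _ ≤ facDist s t := le_max_left _ _

theorem acmNChain.of_facDist_le {z z' : Multiset ℕ} (hz : acmFactorization A B x z)
    (hz' : acmFactorization A B x z') (h : facDist z z' ≤ N) : acmNChain A B x N z z' :=
  ⟨[z, z'], by simp, rfl, rfl, by simp [hz, hz'], List.isChain_pair.2 h⟩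

theorem acmNChain.symm {z z' : Multiset ℕ} (h : acmNChain A B x N z z') :
    acmNChain A B x N z' z := by
  obtain ⟨L, hne, hhead, hlast, hfact, hchain⟩ := h
  refine ⟨L.reverse, by simpa using hne, by rwa [List.head?_reverse],
    by rwa [List.getLast?_reverse], fun w hw => hfact w (List.mem_reverse.1 hw), ?_⟩
  exact List.isChain_reverse.2
    (hchain.imp fun s t h => show facDist t s ≤ N by rwa [facDist, max_comm])

theorem acmNChain.trans {z₁ z₂ z₃ : Multiset ℕ} (h₁ : acmNChain A B x N z₁ z₂)
    (h₂ : acmNChain A B x N z₂ z₃) : acmNChain A B x N z₁ z₃ := by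
  obtain ⟨L₁, hne₁, hhead₁, hlast₁, hfact₁, hchain₁⟩ := h₁
  obtain ⟨L₂, hne₂, hhead₂, hlast₂, hfact₂, hchain₂⟩ := h₂
  refine ⟨L₁ ++ L₂, by simp [hne₁], by rwa [List.head?_append_of_ne_nil _ hne₁],
    by rwa [List.getLast?_append_of_ne_nil _ hne₂],
    fun w hw => (List.mem_append.1 hw).elim (hfact₁ w) (hfact₂ w), ?_⟩
  refine List.isChain_append.2 ⟨hchain₁, hchain₂, fun s hs t ht => ?_⟩
  obtain rfl : z₂ = s := by simpa [hlast₁] using hs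
  obtain rfl : z₂ = t := by simpa [hhead₂] using ht
  simp [facDist]

theorem acmNChain.cons {u : ℕ} {z z' : Multiset ℕ} (hu : acmAtom A B u)
    (h : acmNChain A B x N z z') : acmNChain A B (u * x) N (u ::ₘ z) (u ::ₘ z') := by
  obtain ⟨L, hne, hhead, hlast, hfact, hchain⟩ := h
  refine ⟨L.map (u ::ₘ ·), by simpa using hne, by simp [hhead], by simp [hlast], ?_, ?_⟩
  · simpa using fun w hw => (hfact w hw).cons hu
  · exact (List.isChain_map _).2 (hchain.imp fun s t h => by
      rwa [facDist, Multiset.sub_cons, Multiset.sub_cons, Multiset.erase_cons_head,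
        Multiset.erase_cons_head])

theorem acmNChain.of_erase {u : ℕ} {z t : Multiset ℕ} (hz : acmFactorization A B x z) (hu : u ∈ z)
    (h : acmNChain A B (z.erase u).prod N (z.erase u) t) : acmNChain A B x N z (u ::ₘ t) := by
  have := h.cons (hz.1 u hu)
  rwa [Multiset.prod_erase hu, hz.2, Multiset.cons_erase hu] at this

theorem acmNChain.exists_ne {z z' : Multiset ℕ} (h : acmNChain A B x N z z') (hne : z ≠ z') :
    ∃ w, acmFactorization A B x w ∧ w ≠ z ∧ facDist z w ≤ N := by
  obtain ⟨L, -, hhead, hlast, hfact, hchain⟩ := h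
  induction L generalizing z with
  | nil => simp at hhead
  | cons y L ih =>
    obtain rfl : y = z := by simpa using hhead
    cases L with
    | nil => exact absurd (by simpa using hlast) hne
    | cons y' L =>
      obtain ⟨hyy', hchain'⟩ := List.isChain_cons_cons.1 hchain
      by_cases hy' : y' = y
      · subst hy'
        exact ih hne rfl (by simpa using hlast) (fun w hw => hfact w (by simp_all)) hchain'
      · exact ⟨y', hfact y' (by simp), hy', hyy'⟩

def acmConnected (A B N x : ℕ) : Prop :=
  ∀ z z', acmFactorization A B x z → acmFactorization A B x z' → acmNChain A B x N z z'

theorem acmNChain_of_mem_of_mem {u : ℕ} {z z' : Multiset ℕ} (hz : acmFactorization A B x z)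
    (hz' : acmFactorization A B x z') (hu : u ∈ z) (hu' : u ∈ z')
    (h : acmConnected A B N (z.erase u).prod) : acmNChain A B x N z z' := by
  have hprod : (z'.erase u).prod = (z.erase u).prod := by
    refine Nat.eq_of_mul_eq_mul_left (hz.1 u hu).ne_zero.bot_lt ?_
    rw [Multiset.prod_erase hu, Multiset.prod_erase hu', hz.2, hz'.2]
  have := acmNChain.of_erase hz hu (h _ _ hz.erase (hprod ▸ hz'.erase))
  rwa [Multiset.cons_erase hu'] at this

end Chains

theorem modEq_one_of_mul_eq {b c x y : ℕ} (hx : x ≡ 1 [MOD b]) (hy : y ≡ 1 [MOD b])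
    (h : c * y = x) : c ≡ 1 [MOD b] :=
  calc c = c * 1 := (mul_one c).symm
    _ ≡ c * y [MOD b] := (hy.mul_left c).symm
    _ = x := h
    _ ≡ 1 [MOD b] := hx

theorem modEq_one_of_mul_self_modEq {x b P : ℕ} (hx : x.Coprime b) (h : x * x ≡ x [MOD b * P]) :
    x ≡ 1 [MOD b] :=
  Nat.ModEq.cancel_left_of_coprime hx.symm (by simpa using h.of_mul_right P)

theorem two_le_of_not_acmMem {a b P : ℕ} (hab : a.Coprime b) (haleb : a ≤ b)
    (hP : ¬ acmMem (a * P) (b * P) P) : 2 ≤ b := by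
  by_contra! hb
  interval_cases b
  · simp_all
  · interval_cases a
    · exact hP (Or.inr ⟨1, by ring⟩)
    · exact hP (Or.inr ⟨0, by ring⟩)

theorem acmMem_mul_iff {a b P : ℕ} (hab : a < b) (h : a * P ≡ 1 [MOD b]) (x : ℕ) :
    acmMem (a * P) (b * P) x ↔ x = 1 ∨ (P ∣ x ∧ x ≡ 1 [MOD b]) := by
  refine or_congr Iff.rfl ⟨?_, ?_⟩
  · rintro ⟨k, rfl⟩
    refine ⟨⟨a + k * b, by ring⟩, ?_⟩
    calc a * P + k * (b * P) ≡ a * P + 0 [MOD b] :=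
          Nat.ModEq.add_left _ ((Nat.modEq_zero_iff_dvd).2 ⟨k * P, by ring⟩)
      _ ≡ 1 [MOD b] := h
  · rintro ⟨⟨m, rfl⟩, hm⟩
    have hPb : b.gcd P = 1 := (Nat.Coprime.coprime_mul_left (by
      simpa [Nat.Coprime] using h.gcd_eq)).symm
    have hma : m ≡ a [MOD b] :=
      Nat.ModEq.cancel_left_of_coprime hPb (hm.trans (by rw [mul_comm P a]; exact h.symm))
    refine ⟨m / b, ?_⟩
    have hmod : m % b = a := (show m % b = a % b from hma).trans (Nat.mod_eq_of_lt hab)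
    calc P * m = P * (m % b + b * (m / b)) := by rw [Nat.mod_add_div]
      _ = a * P + m / b * (b * P) := by rw [hmod]; ring

theorem le_add_sub_one_div_mul {α β : ℕ} (hα : 0 < α) : β ≤ (β + α - 1) / α * α := by
  have := Nat.div_add_mod (β + α - 1) α
  have := Nat.mod_lt (β + α - 1) hα
  rw [mul_comm]
  omega

theorem add_sub_one_div_mul_lt {α β : ℕ} (hα : 0 < α) : (β + α - 1) / α * α < β + α := by
  have := Nat.div_mul_le_self (β + α - 1) α
  omega

theorem Nat.factorization_multiset_prod_apply {s : Multiset ℕ} (hs : 0 ∉ s) (p : ℕ) :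
    s.prod.factorization p = (s.map (·.factorization p)).sum := by
  induction s using Multiset.induction with
  | empty => simp
  | cons u s ih =>
    simp only [Multiset.mem_cons, not_or] at hs
    rw [Multiset.prod_cons, Nat.factorization_mul (Ne.symm hs.1) (Multiset.prod_ne_zero hs.2),
      Finsupp.add_apply, ih hs.2, Multiset.map_cons, Multiset.sum_cons]

theorem exists_prime_pow_mul_modEq_one {p b : ℕ} (hb : b ≠ 0) (hpb : p.Coprime b) (k n : ℕ) :
    ∃ r, n < r ∧ r.Prime ∧ p ^ k * r ≡ 1 [MOD b] := by
  have : NeZero b := ⟨hb⟩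
  have hu : IsUnit ((p : ZMod b) ^ k) := ((ZMod.isUnit_iff_coprime p b).2 hpb).pow k
  obtain ⟨r, hr, hrp, hrc⟩ := Nat.forall_exists_prime_gt_and_eq_mod hu.unit⁻¹.isUnit n
  refine ⟨r, hr, hrp, (ZMod.natCast_eq_natCast_iff _ _ _).1 ?_⟩
  push_cast
  rw [hrc]
  exact hu.mul_val_inv

theorem exists_eq_pow_mul_pow_of_dvd {p r u I J : ℕ} (hp : p.Prime) (hr : r.Prime)
    (h : u ∣ p ^ I * r ^ J) : ∃ i j, u = p ^ i * r ^ j := by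
  obtain ⟨y, z, hy, hz, rfl⟩ := Nat.dvd_mul.1 h
  obtain ⟨i, -, rfl⟩ := (Nat.dvd_prime_pow hp).1 hy
  obtain ⟨j, -, rfl⟩ := (Nat.dvd_prime_pow hr).1 hz
  exact ⟨i, j, rfl⟩

theorem factorization_pow_mul_pow {p r : ℕ} (hp : p.Prime) (hr : r.Prime) (hpr : p ≠ r)
    (i j : ℕ) : (p ^ i * r ^ j).factorization p = i ∧ (p ^ i * r ^ j).factorization r = j := by
  rw [Nat.factorization_mul (pow_ne_zero _ hp.ne_zero) (pow_ne_zero _ hr.ne_zero),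
    hp.factorization_pow, hr.factorization_pow]
  simp [hpr, hpr.symm]

/-- The local singular ACM `M_{A,B}`, `A = a p^α`, `B = b p^α`, described by its elements. -/
structure LocalACM (A B p b α β : ℕ) : Prop where
  prime : p.Prime
  two_le : 2 ≤ b
  coprime : p.Coprime b
  pos : 0 < α
  lt : α < β
  mem_iff : ∀ x, acmMem A B x ↔ x = 1 ∨ (p ^ α ∣ x ∧ x ≡ 1 [MOD b])
  pow_mem : acmMem A B (p ^ β)
  pow_not_mem : ∀ γ, 0 < γ → γ < β → ¬ acmMem A B (p ^ γ)

namespace LocalACM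

variable {A B p b α β r x : ℕ}

theorem modEq_one (S : LocalACM A B p b α β) (hx : acmMem A B x) : x ≡ 1 [MOD b] := by
  rcases (S.mem_iff x).1 hx with rfl | h
  exacts [rfl, h.2]

theorem mem_of_dvd_of_modEq (S : LocalACM A B p b α β) (hd : p ^ α ∣ x) (h : x ≡ 1 [MOD b]) :
    acmMem A B x :=
  (S.mem_iff x).2 (Or.inr ⟨hd, h⟩)

theorem ne_zero (S : LocalACM A B p b α β) (hx : acmMem A B x) : x ≠ 0 := by
  rintro rfl
  have := Nat.le_of_dvd one_pos ((Nat.modEq_iff_dvd' zero_le_one).1 (S.modEq_one hx))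
  have := S.two_le
  omega

theorem le_factorization (S : LocalACM A B p b α β) (hx : acmMem A B x) (hx1 : x ≠ 1) :
    α ≤ x.factorization p := by
  rcases (S.mem_iff x).1 hx with h | h
  · exact absurd h hx1
  · exact (S.prime.pow_dvd_iff_le_factorization (S.ne_zero hx)).1 h.1

theorem mem_mul (S : LocalACM A B p b α β) {y : ℕ} (hx : acmMem A B x) (hy : acmMem A B y) :
    acmMem A B (x * y) := by
  rcases (S.mem_iff x).1 hx with rfl | hx'
  · simpa using hy
  rcases (S.mem_iff y).1 hy with rfl | hy'
  · simpa using hx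
  exact S.mem_of_dvd_of_modEq (hx'.1.mul_right y) (by simpa using hx'.2.mul hy'.2)

theorem mem_of_mul_eq (S : LocalACM A B p b α β) {c y : ℕ} (hx : acmMem A B x)
    (hy : y ≡ 1 [MOD b]) (h : c * y = x) (hc : α ≤ c.factorization p) : acmMem A B c := by
  have hc0 : c ≠ 0 := by rintro rfl; exact S.ne_zero hx (by simp [← h])
  exact S.mem_of_dvd_of_modEq ((S.prime.pow_dvd_iff_le_factorization hc0).2 hc)
    (modEq_one_of_mul_eq (S.modEq_one hx) hy h)

theorem mem_of_acmFactorization (S : LocalACM A B p b α β) {z : Multiset ℕ}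
    (hz : acmFactorization A B x z) : acmMem A B x := by
  induction z using Multiset.induction generalizing x with
  | empty => exact hz.2 ▸ Or.inl rfl
  | cons u z ih =>
    rw [← hz.2, Multiset.prod_cons]
    exact S.mem_mul (hz.1 u (by simp)).1 (ih ⟨fun w hw => hz.1 w (by simp [hw]), rfl⟩)

theorem pow_modEq_one (S : LocalACM A B p b α β) : p ^ β ≡ 1 [MOD b] := S.modEq_one S.pow_mem

theorem one_lt_pow (S : LocalACM A B p b α β) : 1 < p ^ β :=
  Nat.one_lt_pow (by have := S.lt; omega) S.prime.one_lt

theorem two_le_ceil (S : LocalACM A B p b α β) : 2 ≤ (β + α - 1) / α := by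
  have := le_add_sub_one_div_mul (β := β) S.pos
  have := S.lt
  exact Nat.lt_of_mul_lt_mul_right (a := α) (by omega)

theorem le_of_pow_mem (S : LocalACM A B p b α β) {γ : ℕ} (hγ : 0 < γ) (h : acmMem A B (p ^ γ)) :
    β ≤ γ :=
  not_lt.1 fun hlt => S.pow_not_mem γ hγ hlt h

/-- The least multiple of `e` above `α` is an exponent `γ` with `p^γ ∈ M`. -/
theorem le_add_of_pow_modEq_one (S : LocalACM A B p b α β) {e : ℕ} (he : 0 < e)
    (h : p ^ e ≡ 1 [MOD b]) : β ≤ α + e := by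
  have hlt := Nat.lt_div_mul_add (a := α) he
  have hle := Nat.div_mul_le_self α e
  refine (S.le_of_pow_mem (by omega) (S.mem_of_dvd_of_modEq (pow_dvd_pow p hlt.le) ?_)).trans
    (by omega)
  rw [show α / e * e + e = e * (α / e + 1) by ring, pow_mul]
  simpa using h.pow (α / e + 1)

theorem exists_eq_pow_mul (S : LocalACM A B p b α β) (hx : acmMem A B x)
    (h : α + β ≤ x.factorization p) :
    ∃ c, acmMem A B c ∧ x = p ^ β * c ∧ c.factorization p + β = x.factorization p := by
  obtain ⟨c, rfl⟩ := (S.prime.pow_dvd_iff_le_factorization (S.ne_zero hx)).2 (by omega : β ≤ _)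
  have hv : (p ^ β * c).factorization p = β + c.factorization p := by
    rw [Nat.factorization_mul (pow_ne_zero _ S.prime.ne_zero) (right_ne_zero_of_mul (S.ne_zero hx))]
    simp [S.prime.factorization_pow]
  exact ⟨c, S.mem_of_mul_eq hx S.pow_modEq_one (mul_comm _ _) (by omega), rfl, by omega⟩

theorem atom_of_factorization_lt (S : LocalACM A B p b α β) {u : ℕ} (hu : acmMem A B u)
    (hu1 : u ≠ 1) (h : u.factorization p < 2 * α) : acmAtom A B u := by
  refine ⟨hu, hu1, fun y z hy hz hyz => ?_⟩
  by_contra! hne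
  have := S.le_factorization hy hne.1
  have := S.le_factorization hz hne.2
  rw [hyz, Nat.factorization_mul (S.ne_zero hy) (S.ne_zero hz), Finsupp.add_apply] at h
  omega

theorem factorization_lt_of_atom (S : LocalACM A B p b α β) {u : ℕ} (hu : acmAtom A B u) :
    u.factorization p < α + β := by
  by_contra! h
  obtain ⟨c, hc, rfl, hvc⟩ := S.exists_eq_pow_mul hu.1 h
  rcases hu.2.2 _ _ S.pow_mem hc rfl with h1 | h1
  · exact S.one_lt_pow.ne' h1
  · subst h1
    rw [Nat.factorization_one, Finsupp.zero_apply] at hvc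
    have := S.pos
    omega

theorem pow_atom (S : LocalACM A B p b α β) : acmAtom A B (p ^ β) := by
  refine ⟨S.pow_mem, S.one_lt_pow.ne', fun y z hy hz h => ?_⟩
  by_contra! hne
  obtain ⟨i, -, rfl⟩ := (Nat.dvd_prime_pow S.prime).1 (Dvd.intro z h.symm)
  obtain ⟨j, -, rfl⟩ := (Nat.dvd_prime_pow S.prime).1 (Dvd.intro_left _ h.symm)
  have hij : β = i + j := Nat.pow_right_injective S.prime.two_le (h.trans (pow_add p i j).symm)
  have hi : i ≠ 0 := by rintro rfl; exact hne.1 (pow_zero p)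
  have hj : j ≠ 0 := by rintro rfl; exact hne.2 (pow_zero p)
  have := S.le_of_pow_mem (Nat.pos_of_ne_zero hi) hy
  omega

theorem card_mul_le_factorization (S : LocalACM A B p b α β) {z : Multiset ℕ}
    (hz : acmFactorization A B x z) : Multiset.card z * α ≤ x.factorization p := by
  rw [← hz.2, Nat.factorization_multiset_prod_apply (fun h => (hz.1 0 h).ne_zero rfl)]
  simpa using Multiset.card_nsmul_le_sum (s := z.map (·.factorization p)) (a := α)
    (by simpa using fun u hu => S.le_factorization (hz.1 u hu).1 (hz.1 u hu).2.1)

theorem exists_acmFactorization (S : LocalACM A B p b α β) (hx : acmMem A B x) :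
    ∃ z, acmFactorization A B x z :=
  _root_.exists_acmFactorization (fun h => S.ne_zero h rfl) hx

/-! ### Upper bound -/

theorem exists_short_factorization (S : LocalACM A B p b α β) (hx : acmMem A B x)
    (hlow : α + β ≤ x.factorization p) (hhigh : x.factorization p < 2 * (α + β)) :
    ∃ w, acmFactorization A B x w ∧ p ^ β ∈ w ∧ Multiset.card w ≤ (β + α - 1) / α + 1 := by
  have hq := le_add_sub_one_div_mul (β := β) S.pos
  have hq2 := S.two_le_ceil
  obtain ⟨c, hc, rfl, hvc⟩ := S.exists_eq_pow_mul hx hlow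
  by_cases hc' : α + β ≤ c.factorization p
  · obtain ⟨c', hc'mem, rfl, hvc'⟩ := S.exists_eq_pow_mul hc hc'
    have hc'1 : c' ≠ 1 := by
      rintro rfl
      rw [Nat.factorization_one, Finsupp.zero_apply] at hvc'
      omega
    have hc'atom := S.atom_of_factorization_lt hc'mem hc'1 (by omega)
    refine ⟨p ^ β ::ₘ p ^ β ::ₘ {c'},
      ((acmFactorization.singleton hc'atom).cons S.pow_atom).cons S.pow_atom, by simp, ?_⟩
    simp only [Multiset.card_cons, Multiset.card_singleton]
    omega
  · obtain ⟨G, hG⟩ := S.exists_acmFactorization hc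
    have hG' := S.card_mul_le_factorization hG
    refine ⟨p ^ β ::ₘ G, hG.cons S.pow_atom, by simp, ?_⟩
    have : Multiset.card G * α < ((β + α - 1) / α + 1) * α := by rw [add_mul]; omega
    simpa using Nat.lt_of_mul_lt_mul_right this

theorem exists_chain_to_pow_mem_of_mem (S : LocalACM A B p b α β) {N u : ℕ} {z : Multiset ℕ}
    (IH : ∀ m < x, acmConnected A B N m) (hz : acmFactorization A B x z) (hu : u ∈ z)
    (h : α + β ≤ (z.erase u).prod.factorization p) :
    ∃ w, acmFactorization A B x w ∧ p ^ β ∈ w ∧ acmNChain A B x N z w := by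
  obtain ⟨c, hc, hyc, -⟩ := S.exists_eq_pow_mul (S.mem_of_acmFactorization hz.erase) h
  obtain ⟨G, hG⟩ := S.exists_acmFactorization hc
  have hF : acmFactorization A B (z.erase u).prod (p ^ β ::ₘ G) := hyc ▸ hG.cons S.pow_atom
  refine ⟨u ::ₘ p ^ β ::ₘ G, ?_, by simp,
    acmNChain.of_erase hz hu (IH _ (hz.prod_erase_lt hu) _ _ hz.erase hF)⟩
  simpa [Multiset.prod_erase hu, hz.2] using hF.cons (hz.1 u hu)

theorem exists_chain_to_pow_mem (S : LocalACM A B p b α β) {z : Multiset ℕ}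
    (IH : ∀ m < x, acmConnected A B ((β + α - 1) / α + 1) m) (hz : acmFactorization A B x z)
    (hx : α + β ≤ x.factorization p) :
    ∃ w, acmFactorization A B x w ∧ p ^ β ∈ w ∧ acmNChain A B x ((β + α - 1) / α + 1) z w := by
  by_cases h : ∃ u ∈ z, α + β ≤ (z.erase u).prod.factorization p
  · obtain ⟨u, hu, h⟩ := h
    exact S.exists_chain_to_pow_mem_of_mem IH hz hu h
  push Not at h
  obtain ⟨u, hu⟩ : ∃ u, u ∈ z := Multiset.exists_mem_of_ne_zero <| by
    rintro rfl
    rw [← hz.2, Multiset.prod_zero, Nat.factorization_one, Finsupp.zero_apply] at hx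
    have := S.pos
    omega
  have hsplit : x.factorization p = u.factorization p + (z.erase u).prod.factorization p := by
    rw [← hz.2, ← Multiset.prod_erase hu,
      Nat.factorization_mul (hz.1 u hu).ne_zero (hz.erase (u := u)).ne_zero, Finsupp.add_apply]
  have hu_lt := S.factorization_lt_of_atom (hz.1 u hu)
  have hrest := h u hu
  obtain ⟨w, hw, hpw, hcard⟩ :=
    S.exists_short_factorization (S.mem_of_acmFactorization hz) hx (by omega)
  refine ⟨w, hw, hpw, .of_facDist_le hz hw ((facDist_le_max_card z w).trans (max_le ?_ hcard))⟩
  have hcard_rest := S.card_mul_le_factorization (hz.erase (u := u))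
  rw [Multiset.card_erase_of_mem hu, Nat.pred_eq_sub_one] at hcard_rest
  have hq := le_add_sub_one_div_mul (β := β) S.pos
  have : (Multiset.card z - 1) * α < ((β + α - 1) / α + 1) * α := by rw [add_mul]; omega
  have := Nat.lt_of_mul_lt_mul_right this
  omega

theorem acmConnected_ceil_add_one (S : LocalACM A B p b α β) (x : ℕ) :
    acmConnected A B ((β + α - 1) / α + 1) x := by
  induction x using Nat.strong_induction_on with
  | _ x IH =>
  intro z z' hz hz'
  by_cases hshort :
      Multiset.card z ≤ (β + α - 1) / α + 1 ∧ Multiset.card z' ≤ (β + α - 1) / α + 1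
  · exact .of_facDist_le hz hz' ((facDist_le_max_card z z').trans (max_le hshort.1 hshort.2))
  have hx : α + β ≤ x.factorization p := by
    have hq := le_add_sub_one_div_mul (β := β) S.pos
    have long : ∀ {w}, acmFactorization A B x w → (β + α - 1) / α + 1 < Multiset.card w →
        α + β ≤ x.factorization p := fun {w} hw hlt =>
      calc α + β ≤ ((β + α - 1) / α + 2) * α := by rw [add_mul]; omega
        _ ≤ Multiset.card w * α := Nat.mul_le_mul_right α hlt
        _ ≤ x.factorization p := S.card_mul_le_factorization hw
    rw [not_and_or, not_le, not_le] at hshort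
    exact hshort.elim (long hz) (long hz')
  obtain ⟨w, hw, hpw, hzw⟩ := S.exists_chain_to_pow_mem IH hz hx
  obtain ⟨w', hw', hpw', hzw'⟩ := S.exists_chain_to_pow_mem IH hz' hx
  exact (hzw.trans (acmNChain_of_mem_of_mem hw hw' hpw hpw' (IH _ (hw.prod_erase_lt hpw)))).trans
    hzw'.symm

/-! ### Lower bound -/

theorem eq_zero_or_le_of_pow_mul_pow_mem (S : LocalACM A B p b α β) (hr : r.Prime) (hpr : p ≠ r)
    {i j : ℕ} (h : acmMem A B (p ^ i * r ^ j)) : (i = 0 ∧ j = 0) ∨ α ≤ i := by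
  by_cases h1 : p ^ i * r ^ j = 1
  · left
    simpa [S.prime.ne_one, hr.ne_one] using h1
  · right
    simpa [(factorization_pow_mul_pow S.prime hr hpr i j).1] using S.le_factorization h h1

/-- An atom `p^i r^j` with `j ≥ 1` and `i ≥ 2α` would have the proper factor `p^α r`. -/
theorem lt_two_mul_of_pow_mul_pow_atom (S : LocalACM A B p b α β) (hr : r.Prime) (hpr : p ≠ r)
    (hA : p ^ α * r ≡ 1 [MOD b]) {i j : ℕ} (hu : acmAtom A B (p ^ i * r ^ j)) (hj : 1 ≤ j) :
    i < 2 * α := by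
  by_contra! hi
  obtain ⟨i, rfl⟩ : ∃ i', i = i' + α := ⟨i - α, by omega⟩
  obtain ⟨j, rfl⟩ : ∃ j', j = j' + 1 := ⟨j - 1, by omega⟩
  have hcA : p ^ i * r ^ j * (p ^ α * r) = p ^ (i + α) * r ^ (j + 1) := by ring
  have hfc := (factorization_pow_mul_pow S.prime hr hpr i j).1
  have hc := S.mem_of_mul_eq hu.1 hA hcA (by omega)
  rcases hu.2.2 _ _ hc (S.mem_of_dvd_of_modEq (dvd_mul_right _ _) hA) hcA.symm with h | h
  · rw [h, Nat.factorization_one, Finsupp.zero_apply] at hfc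
    have := S.pos
    omega
  · exact hr.ne_one (Nat.eq_one_of_mul_eq_one_left h)

theorem one_le_of_pow_mul_pow_atom (S : LocalACM A B p b α β) (hr : r.Prime) (hpr : p ≠ r)
    {k i j i' j' : ℕ} (hk : k ≤ (β + α - 1) / α) (hu : acmAtom A B (p ^ i * r ^ j))
    (hc : acmMem A B (p ^ i' * r ^ j')) (hi : i + i' = α * k) (hj : j + j' = k) : 1 ≤ j := by
  by_contra! h0
  obtain rfl : j = 0 := by omega
  have hαi := (S.eq_zero_or_le_of_pow_mul_pow_mem hr hpr hu.1).resolve_left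
    fun h => hu.2.1 (by simp [h.1])
  have hβi : β ≤ i := S.le_of_pow_mem (by have := S.pos; omega) (by simpa using hu.1)
  rcases S.eq_zero_or_le_of_pow_mul_pow_mem hr hpr hc with ⟨rfl, rfl⟩ | hαi'
  · obtain rfl : k = 0 := by omega
    have := S.pos
    simp at hi
    omega
  · have := add_sub_one_div_mul_lt (β := β) S.pos
    have : α * k ≤ (β + α - 1) / α * α := by rw [mul_comm]; exact Nat.mul_le_mul_right α hk
    omega

/-- If `i > α`, then `p^(i-α) ≡ 1 (mod b)` with `0 < i - α < α` forces `β ≤ i < 2α`, hence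
`k ≤ ⌈β/α⌉ ≤ 2`, leaving too little `p` for the cofactor. -/
theorem eq_of_pow_mul_atom (S : LocalACM A B p b α β) (hr : r.Prime) (hpr : p ≠ r)
    (hA : p ^ α * r ≡ 1 [MOD b]) {k i i' j' : ℕ} (hk : k ≤ (β + α - 1) / α)
    (hu : acmAtom A B (p ^ i * r ^ 1)) (hc : acmMem A B (p ^ i' * r ^ j')) (hi : i + i' = α * k)
    (hj : 1 + j' = k) : i = α := by
  have hαi := (S.eq_zero_or_le_of_pow_mul_pow_mem hr hpr hu.1).resolve_left (by simp)
  have hi2 := S.lt_two_mul_of_pow_mul_pow_atom hr hpr hA hu le_rfl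
  by_contra hne
  have hpe : p ^ (i - α) ≡ 1 [MOD b] := modEq_one_of_mul_eq (S.modEq_one hu.1) hA <| by
    rw [pow_one, ← mul_assoc, ← pow_add, Nat.sub_add_cancel hαi]
  have hβ := S.le_add_of_pow_modEq_one (by omega) hpe
  have hq := add_sub_one_div_mul_lt (β := β) S.pos
  have hq3 : (β + α - 1) / α < 3 := Nat.lt_of_mul_lt_mul_right (a := α) (by omega)
  rcases S.eq_zero_or_le_of_pow_mul_pow_mem hr hpr hc with ⟨rfl, rfl⟩ | hαi'
  · obtain rfl : k = 1 := by omega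
    omega
  · have : α * k ≤ α * 2 := Nat.mul_le_mul_left α (by omega)
    omega

theorem factorization_le_of_atom_mul_eq (S : LocalACM A B p b α β) (hr : r.Prime) (hpr : p ≠ r)
    (hA : p ^ α * r ≡ 1 [MOD b]) {k u c : ℕ} (hk : k ≤ (β + α - 1) / α) (hu : acmAtom A B u)
    (hc : acmMem A B c) (huc : u * c = (p ^ α * r) ^ k) :
    u.factorization p ≤ α * u.factorization r ∧
      (u.factorization p = α * u.factorization r → u = p ^ α * r) := by
  have hAk : (p ^ α * r) ^ k = p ^ (α * k) * r ^ k := by rw [mul_pow, pow_mul]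
  have hfact := factorization_pow_mul_pow S.prime hr hpr
  obtain ⟨i, j, rfl⟩ := exists_eq_pow_mul_pow_of_dvd S.prime hr (hAk ▸ huc ▸ dvd_mul_right u c)
  obtain ⟨i', j', rfl⟩ := exists_eq_pow_mul_pow_of_dvd S.prime hr (hAk ▸ huc ▸ dvd_mul_left c _)
  have hprod : p ^ (i + i') * r ^ (j + j') = p ^ (α * k) * r ^ k := by rw [← hAk, ← huc]; ring
  have hi : i + i' = α * k := by simpa [(hfact _ _).1] using congrArg (·.factorization p) hprod
  have hj : j + j' = k := by simpa [(hfact _ _).2] using congrArg (·.factorization r) hprod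
  rw [(hfact i j).1, (hfact i j).2]
  have hj1 := S.one_le_of_pow_mul_pow_atom hr hpr hk hu hc hi hj
  rcases (by omega : j = 1 ∨ 2 ≤ j) with rfl | hj2
  · obtain rfl := S.eq_of_pow_mul_atom hr hpr hA hk hu hc hi hj
    simp
  · have hi2 := S.lt_two_mul_of_pow_mul_pow_atom hr hpr hA hu hj1
    have : 2 * α ≤ α * j := by rw [mul_comm]; exact Nat.mul_le_mul_left α hj2
    omega

/-- Every atom `u` of `w` has `v_p(u) ≤ α v_r(u)`, with equality only for `p^α r`, while both sides
sum to `α k`. -/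
theorem eq_replicate_of_acmFactorization (S : LocalACM A B p b α β) (hr : r.Prime) (hpr : p ≠ r)
    (hA : p ^ α * r ≡ 1 [MOD b]) {k : ℕ} {w : Multiset ℕ} (hk : k ≤ (β + α - 1) / α)
    (hw : acmFactorization A B ((p ^ α * r) ^ k) w) : w = Multiset.replicate k (p ^ α * r) := by
  have key : ∀ u ∈ w, u.factorization p ≤ α * u.factorization r ∧
      (u.factorization p = α * u.factorization r → u = p ^ α * r) := fun u hu =>
    S.factorization_le_of_atom_mul_eq hr hpr hA hk (hw.1 u hu)
      (S.mem_of_acmFactorization hw.erase) (by rw [Multiset.prod_erase hu, hw.2])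
  have hsum : ∀ q, (w.map (·.factorization q)).sum = ((p ^ α * r) ^ k).factorization q :=
    fun q => by rw [← hw.2, Nat.factorization_multiset_prod_apply (fun h => (hw.1 0 h).ne_zero rfl)]
  have hall : ∀ u ∈ w, u = p ^ α * r := by
    by_contra! ⟨u, hu, hne⟩
    have := Multiset.sum_lt_sum (fun u hu => (key u hu).1)
      ⟨u, hu, lt_of_le_of_ne (key u hu).1 (mt (key u hu).2 hne)⟩
    have hAk : (p ^ α * r) ^ k = p ^ (α * k) * r ^ k := by rw [mul_pow, pow_mul]
    rw [Multiset.sum_map_mul_left, hsum, hsum, hAk,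
      (factorization_pow_mul_pow S.prime hr hpr _ _).1,
      (factorization_pow_mul_pow S.prime hr hpr _ _).2] at this
    exact lt_irrefl _ this
  have hpow : (p ^ α * r) ^ Multiset.card w = (p ^ α * r) ^ k := by
    rw [← Multiset.prod_replicate, ← Multiset.eq_replicate_card.2 hall, hw.2]
  rw [Multiset.eq_replicate_card.2 hall, Nat.pow_right_injective
    (hr.two_le.trans (Nat.le_mul_of_pos_left r (pow_pos S.prime.pos α))) hpow]

theorem pow_mul_atom (S : LocalACM A B p b α β) (hr : r.Prime) (hpr : p ≠ r)
    (hA : p ^ α * r ≡ 1 [MOD b]) : acmAtom A B (p ^ α * r) := by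
  have hv : (p ^ α * r).factorization p = α := by
    simpa using (factorization_pow_mul_pow S.prime hr hpr α 1).1
  refine S.atom_of_factorization_lt (S.mem_of_dvd_of_modEq (dvd_mul_right _ _) hA)
    (fun h => hr.ne_one (Nat.eq_one_of_mul_eq_one_left h)) (by have := S.pos; omega)

/-- The factorization `p^β · p^((⌈β/α⌉+1)α-β) r^(⌈β/α⌉+1)`. -/
theorem exists_card_two_acmFactorization (S : LocalACM A B p b α β) (hr : r.Prime) (hpr : p ≠ r)
    (hA : p ^ α * r ≡ 1 [MOD b]) :
    ∃ z, acmFactorization A B ((p ^ α * r) ^ ((β + α - 1) / α + 1)) z ∧ Multiset.card z = 2 := by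
  have hq := le_add_sub_one_div_mul (β := β) S.pos
  have hq' := add_sub_one_div_mul_lt (β := β) S.pos
  set q := (β + α - 1) / α
  have hqα : (q + 1) * α = q * α + α := by ring
  have hfact := factorization_pow_mul_pow S.prime hr hpr
  have hpu : p ^ β * (p ^ ((q + 1) * α - β) * r ^ (q + 1)) = (p ^ α * r) ^ (q + 1) := by
    rw [mul_pow, ← pow_mul, ← mul_assoc, ← pow_add]
    congr 2
    rw [mul_comm α]
    omega
  have hmem : acmMem A B ((p ^ α * r) ^ (q + 1)) :=
    S.mem_of_acmFactorization (x := (p ^ α * r) ^ (q + 1)) (z := .replicate (q + 1) (p ^ α * r))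
      ⟨fun v hv => Multiset.eq_of_mem_replicate hv ▸ S.pow_mul_atom hr hpr hA,
        Multiset.prod_replicate _ _⟩
  have hu : acmAtom A B (p ^ ((q + 1) * α - β) * r ^ (q + 1)) :=
    S.atom_of_factorization_lt
      (S.mem_of_mul_eq hmem S.pow_modEq_one (by rw [mul_comm, hpu]) (by rw [(hfact _ _).1]; omega))
      (fun h => by simpa [h] using (hfact ((q + 1) * α - β) (q + 1)).2.symm)
      (by rw [(hfact _ _).1]; omega)
  exact ⟨_, hpu ▸ (acmFactorization.singleton hu).cons S.pow_atom, by simp⟩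

theorem ceil_add_one_le_of_mem_acmCatSet (S : LocalACM A B p b α β) {N : ℕ}
    (hN : N ∈ acmCatSet A B) : (β + α - 1) / α + 1 ≤ N := by
  have hq2 := S.two_le_ceil
  set q := (β + α - 1) / α
  obtain ⟨r, hpr, hr, hA⟩ :=
    exists_prime_pow_mul_modEq_one (by have := S.two_le; omega) S.coprime α p
  have hm := S.pow_mul_atom hr hpr.ne hA
  have hz₁ : acmFactorization A B ((p ^ α * r) ^ (q + 1)) (.replicate (q + 1) (p ^ α * r)) :=
    ⟨fun v hv => Multiset.eq_of_mem_replicate hv ▸ hm, Multiset.prod_replicate _ _⟩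
  obtain ⟨z₂, hz₂, hcard⟩ := S.exists_card_two_acmFactorization hr hpr.ne hA
  obtain ⟨w, hw, hne, hdist⟩ := (hN _ (S.mem_of_acmFactorization hz₁) _ _ hz₁ hz₂).exists_ne
    fun h => by simp [← h] at hcard; omega
  have hmw : p ^ α * r ∉ w := by
    intro hmw
    apply hne
    have hrest : acmFactorization A B ((p ^ α * r) ^ q) (w.erase (p ^ α * r)) := by
      refine ⟨hw.erase.1, Nat.eq_of_mul_eq_mul_left hm.ne_zero.bot_lt ?_⟩
      rw [Multiset.prod_erase hmw, hw.2, pow_succ']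
    rw [← Multiset.cons_erase hmw, S.eq_replicate_of_acmFactorization hr hpr.ne hA le_rfl hrest,
      Multiset.replicate_succ]
  have := count_le_facDist_of_notMem (s := .replicate (q + 1) (p ^ α * r)) hmw
  rw [Multiset.count_replicate_self] at this
  omega

end LocalACM

theorem local_catenary_alpha_lt_beta_general (p a b α β : ℕ) (hp : p.Prime) (haleb : a ≤ b)
    (hab : Nat.Coprime a b) (hpb : ¬ p ∣ b) (hα : 0 < α)
    (hacm : (a * p ^ α) * (a * p ^ α) ≡ a * p ^ α [MOD b * p ^ α])
    (hβmem : acmMem (a * p ^ α) (b * p ^ α) (p ^ β))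
    (hβmin : ∀ γ : ℕ, 0 < γ → γ < β → ¬ acmMem (a * p ^ α) (b * p ^ α) (p ^ γ)) (hαβ : α < β) :
    IsLeast (acmCatSet (a * p ^ α) (b * p ^ α)) (1 + (β + α - 1) / α) := by
  have hpb' : p.Coprime b := (Nat.Prime.coprime_iff_not_dvd hp).2 hpb
  have hb : 2 ≤ b := two_le_of_not_acmMem hab haleb (hβmin α hα hαβ)
  have hab' : a < b := haleb.lt_of_ne fun h => by simp [h] at hab; omega
  have hunit : a * p ^ α ≡ 1 [MOD b] :=
    modEq_one_of_mul_self_modEq (hab.mul_left (hpb'.pow_left α)) hacm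
  have S : LocalACM (a * p ^ α) (b * p ^ α) p b α β :=
    ⟨hp, hb, hpb', hα, hαβ, acmMem_mul_iff hab' hunit, hβmem, hβmin⟩
  refine ⟨fun x _ => add_comm 1 ((β + α - 1) / α) ▸ S.acmConnected_ceil_add_one x, fun N hN => ?_⟩
  have := S.ceil_add_one_le_of_mem_acmCatSet hN
  omega

/-- For a local singular ACM `M = M_{a p^α, b p^α}` with `α < β` (`β`
minimal with `p^β ∈ M`), the catenary degree of `M` is `1 + ⌈β/α⌉`. -/
theorem local_catenary_alpha_lt_beta (p a b α β : ℕ) (hp : p.Prime) (ha : 0 < a) (haleb : a ≤ b)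
    (hab : Nat.Coprime a b) (hpa : ¬ p ∣ a) (hpb : ¬ p ∣ b) (hα : 0 < α)
    (hacm : (a * p ^ α) * (a * p ^ α) ≡ a * p ^ α [MOD b * p ^ α])
    (hβ : 0 < β) (hβmem : acmMem (a * p ^ α) (b * p ^ α) (p ^ β))
    (hβmin : ∀ γ : ℕ, 0 < γ → γ < β → ¬ acmMem (a * p ^ α) (b * p ^ α) (p ^ γ)) (hαβ : α < β) :
    IsLeast (acmCatSet (a * p ^ α) (b * p ^ α)) (1 + (β + α - 1) / α) :=
  local_catenary_alpha_lt_beta_general p a b α β hp haleb hab hpb hα hacm hβmem hβmin hαβ
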